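/- (Nonexistence of positive periodic solutions in the critical and subcritical cases under strong subhomogeneity) Assume (F1) and (F2), and assume f is strongly subhomogeneous: f(x,t,ρu) ≫ ρ f(x,t,u) (strict inequality in every component) for all (x,t) ∈ Q̄_T, u ≫ 0 and ρ ∈ (0,1). Define b_ik(x,t) = ∂_{u_k} f_i(x,t,0), ℓ_ii = b_ii − d*_i, ℓ_ik = b_ik for i ≠ k, and let 𝓛 be the associated linear operator. Assume that for every φ ∈ P^m and every μ ∈ ℝ with 𝓛[φ] ≥ μφ on Q̄_T one has μ ≤ 0 (i.e. the generalized principal eigenvalue λ(𝓛) is ≤ 0). Then problem (3.1) has no solution U with all U_i continuous on Q̄_T and U_i(x,t) > 0 for all (x,t) ∈ Q̄_T. -/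

import Mathlib

open MeasureTheory Set Function

/-- An m×m real matrix is irreducible if the index set cannot be split into two
disjoint nonempty parts `I`, `Iᶜ` with `a i k = 0` for all `i ∈ I`, `k ∈ Iᶜ`. -/
def MatIrreducible {m : ℕ} (a : Fin m → Fin m → ℝ) : Prop :=
  ∀ I : Set (Fin m), I.Nonempty → Iᶜ.Nonempty → ∃ i ∈ I, ∃ k ∈ Iᶜ, a i k ≠ 0

/-- Membership in `P^m` (positive, time-periodic, continuous on `Q̄_T`, C¹ in time),
with explicit time-derivative data `φt`. -/
def IsPm {N m : ℕ} (Ω : Set (Fin N → ℝ)) (T : ℝ)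
    (φ φt : Fin m → (Fin N → ℝ) → ℝ → ℝ) : Prop :=
  (∀ i, ContinuousOn (fun q : (Fin N → ℝ) × ℝ => φ i q.1 q.2)
    (closure Ω ×ˢ Icc (0:ℝ) T)) ∧
  (∀ i, ∀ x ∈ closure Ω, ∀ t ∈ Icc (0:ℝ) T,
    HasDerivWithinAt (φ i x) (φt i x t) (Icc (0:ℝ) T) t) ∧
  (∀ i, ∀ x ∈ closure Ω, ContinuousOn (φt i x) (Icc (0:ℝ) T)) ∧
  (∀ i, ∀ x ∈ closure Ω, φ i x 0 = φ i x T) ∧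
  (∀ i, ∀ x ∈ closure Ω, ∀ t ∈ Icc (0:ℝ) T, 0 < φ i x t)

/-- The expression `𝓛_i[φ](x,t)` for the operator with coefficient matrix `L`. -/
noncomputable def calL {N m : ℕ} (Ω : Set (Fin N → ℝ)) (d : Fin m → ℝ)
    (J : Fin m → (Fin N → ℝ) → (Fin N → ℝ) → ℝ)
    (L : Fin m → Fin m → (Fin N → ℝ) → ℝ → ℝ)
    (φ φt : Fin m → (Fin N → ℝ) → ℝ → ℝ)
    (i : Fin m) (x : Fin N → ℝ) (t : ℝ) : ℝ :=
  d i * (∫ y in Ω, J i x y * φ i y t) + (∑ k, L i k x t * φ k x t) - φt i x t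

open Filter Topology

/-!
Along a ray `s ↦ s • u` with `u ≫ 0`, strong subhomogeneity makes `s ↦ fᵢ(s • u) / s` strictly
decreasing, and its limit as `s → 0⁺` is the linearisation `∑ₖ ∂ₖfᵢ(0) uₖ`; hence
`fᵢ(u) < ∑ₖ bᵢₖ uₖ`. A positive periodic solution `U` is itself an admissible test function
(continuity of `∂ₜU` at `t = 0` comes from the derivative-limit theorem), and for it
`𝓛ᵢ[U] = ∑ₖ bᵢₖ Uₖ - fᵢ(U) > 0` on the compact set `Q̄_T`. So `𝓛[U] ≥ μ U` for some `μ > 0`,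
contradicting `λ(𝓛) ≤ 0`.
-/

theorem abs_sub_sub_mul_le_of_hasDerivWithinAt_Ici {g g' : ℝ → ℝ} {a b L ε : ℝ} (hab : a ≤ b)
    (hg : ∀ r ∈ Icc a b, HasDerivWithinAt g (g' r) (Ici a) r)
    (hg' : ∀ r ∈ Ico a b, |g' r - L| ≤ ε) :
    |g b - g a - L * (b - a)| ≤ ε * (b - a) := by
  have hh : ∀ r ∈ Icc a b, HasDerivWithinAt (fun r => g r - L * r) (g' r - L) (Ici a) r :=
    fun r hr => (hg r hr).sub (by simpa using (hasDerivWithinAt_id r (Ici a)).const_mul L)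
  have key := norm_image_sub_le_of_norm_deriv_right_le_segment
    (fun r hr => (hh r hr).continuousWithinAt.mono Icc_subset_Ici_self)
    (fun r hr => (hh r (Ico_subset_Icc_self hr)).mono (Ici_subset_Ici.2 hr.1)) hg' b
    (right_mem_Icc.2 hab)
  rw [Real.norm_eq_abs] at key
  convert key using 2
  ring

theorem lt_of_tendsto_div_of_subhomogeneous {g : ℝ → ℝ} {A : ℝ}
    (hg : ∀ r > 0, ∀ ρ ∈ Ioo (0 : ℝ) 1, ρ * g r < g (ρ * r))
    (hA : Tendsto (fun s => g s / s) (𝓝[>] 0) (𝓝 A)) : g 1 < A := by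
  have hhalf : g 1 < 2 * g (1 / 2) := by
    have := hg 1 one_pos (1 / 2) ⟨by norm_num, by norm_num⟩
    rw [mul_one] at this
    linarith
  have hlim : 2 * g (1 / 2) ≤ A := by
    refine ge_of_tendsto hA ?_
    filter_upwards [Ioo_mem_nhdsGT (show (0 : ℝ) < 1 / 2 by norm_num)] with s hs
    have := hg (1 / 2) (by norm_num) (2 * s) ⟨by linarith [hs.1], by linarith [hs.2]⟩
    rw [show 2 * s * (1 / 2) = s by ring] at this
    rw [le_div_iff₀ hs.1]
    linarith
  linarith

theorem eqOn_Icc_of_hasDerivWithinAt_of_eqOn_Ioc {g g' G : ℝ → ℝ} {a b : ℝ} (hab : a < b)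
    (hg : ∀ t ∈ Icc a b, HasDerivWithinAt g (g' t) (Icc a b) t)
    (hG : ContinuousOn G (Icc a b)) (heq : EqOn g' G (Ioc a b)) : EqOn g' G (Icc a b) := by
  intro t ht
  rcases ht.1.eq_or_lt with rfl | hat
  · have hderiv : ∀ s ∈ Ioo a b, HasDerivAt g (g' s) s := fun s hs =>
      (hg s (Ioo_subset_Icc_self hs)).hasDerivAt (Icc_mem_nhds hs.1 hs.2)
    have hlim : Tendsto (deriv g) (𝓝[>] a) (𝓝 (G a)) := by
      rw [← nhdsWithin_Ioo_eq_nhdsGT hab]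
      refine ((hG a ht).mono Ioo_subset_Icc_self).congr' ?_
      filter_upwards [self_mem_nhdsWithin] with s hs
      rw [(hderiv s hs).deriv, heq ⟨hs.1, hs.2.le⟩]
    have hright := hasDerivWithinAt_Ici_of_tendsto_deriv
      (fun s hs => (hderiv s hs).differentiableAt.differentiableWithinAt)
      ((hg a ht).continuousWithinAt.mono Ioo_subset_Icc_self) (Ioo_mem_nhdsGT hab) hlim
    exact (uniqueDiffOn_Icc hab a ht).eq_deriv _ (hg a ht) (hright.mono Icc_subset_Ici_self)
  · exact heq ⟨hat, ht.2⟩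

theorem norm_le_norm_of_mem_Icc_zero {ι : Type*} [Fintype ι] {v w : ι → ℝ}
    (hv : v ∈ Icc 0 w) : ‖v‖ ≤ ‖w‖ :=
  (pi_norm_le_iff_of_nonneg (norm_nonneg w)).2 fun i => by
    rw [Real.norm_of_nonneg (hv.1 i)]
    exact (hv.2 i).trans ((le_abs_self _).trans (norm_le_pi_norm w i))

section Partials

variable {m : ℕ} {F : (Fin m → ℝ) → ℝ} {D : Fin m → (Fin m → ℝ) → ℝ}

theorem abs_sub_sum_partial_mul_le
    (hD : ∀ k v, 0 ≤ v → HasDerivWithinAt (fun s => F (update v k s)) (D k v) (Ici 0) (v k))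
    {u : Fin m → ℝ} (hu : 0 ≤ u) {ε : ℝ} (hε : ∀ k, ∀ v ∈ Icc 0 u, |D k v - D k 0| ≤ ε)
    (S : Finset (Fin m)) :
    |F (S.piecewise u 0) - F 0 - ∑ k ∈ S, D k 0 * u k| ≤ ε * ∑ k ∈ S, u k := by
  induction S using Finset.induction_on with
  | empty => simp
  | insert j S hj ih =>
    set v := S.piecewise u 0
    have hv : v ∈ Icc 0 u := S.piecewise_mem_Icc' hu
    have hvj : v j = 0 := by simp [v, hj]
    have hline : ∀ r ∈ Icc 0 (u j), update v j r ∈ Icc 0 u := fun r hr =>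
      ⟨le_update_iff.2 ⟨hr.1, fun k _ => hv.1 k⟩, update_le_iff.2 ⟨hr.2, fun k _ => hv.2 k⟩⟩
    have hstep := abs_sub_sub_mul_le_of_hasDerivWithinAt_Ici (a := 0) (hu j)
      (g := fun r => F (update v j r)) (L := D j 0)
      (fun r hr => by simpa using hD j (update v j r) (hline r hr).1)
      (fun r hr => hε j _ (hline r (Ico_subset_Icc_self hr)))
    have hv0 : update v j 0 = v := update_eq_self_iff.2 hvj.symm
    rw [hv0, sub_zero] at hstep
    rw [Finset.piecewise_insert, Finset.sum_insert hj, Finset.sum_insert hj]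
    rw [abs_le] at hstep ih ⊢
    constructor <;> linarith [hstep.1, hstep.2, ih.1, ih.2]

theorem tendsto_apply_smul_div_of_partials
    (hD : ∀ k v, 0 ≤ v → HasDerivWithinAt (fun s => F (update v k s)) (D k v) (Ici 0) (v k))
    (hDcont : ∀ k, ContinuousWithinAt (D k) (Ici 0) 0) (hF0 : F 0 = 0)
    {u : Fin m → ℝ} (hu : 0 ≤ u) :
    Tendsto (fun s => F (s • u) / s) (𝓝[>] 0) (𝓝 (∑ k, D k 0 * u k)) := by
  rw [Metric.tendsto_nhds]
  intro ε hε
  set σ := ∑ k, u k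
  have hσ : 0 ≤ σ := Finset.sum_nonneg fun k _ => hu k
  set ε' := ε / (σ + 1)
  have hε' : 0 < ε' := div_pos hε (by linarith)
  have hnear : ∀ᶠ v in 𝓝[Ici 0] (0 : Fin m → ℝ), ∀ k, |D k v - D k 0| ≤ ε' :=
    eventually_all.2 fun k => (hDcont k).eventually (Metric.closedBall_mem_nhds _ hε')
  obtain ⟨δ, hδ, hball⟩ := Metric.eventually_nhds_iff.1 (eventually_nhdsWithin_iff.1 hnear)
  have hsmall : ∀ᶠ s in 𝓝 (0 : ℝ), ‖s • u‖ < δ := by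
    have : Tendsto (fun s : ℝ => s • u) (𝓝 0) (𝓝 0) :=
      (continuous_id.smul continuous_const).tendsto' 0 0 (zero_smul ℝ u)
    simpa using this.eventually (Metric.ball_mem_nhds 0 hδ)
  filter_upwards [nhdsWithin_le_nhds hsmall, self_mem_nhdsWithin] with s hs (hs0 : 0 < s)
  have hsu : 0 ≤ s • u := smul_nonneg hs0.le hu
  have hbound := abs_sub_sum_partial_mul_le hD hsu (ε := ε') (fun k v hv => hball
    (by rw [dist_zero_right]; exact (norm_le_norm_of_mem_Icc_zero hv).trans_lt hs) hv.1 k)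
    Finset.univ
  have hlin : ∑ k, D k 0 * (s • u) k = s * ∑ k, D k 0 * u k := by
    rw [Finset.mul_sum]
    exact Finset.sum_congr rfl fun k _ => by simp only [Pi.smul_apply, smul_eq_mul]; ring
  have hmass : ∑ k, (s • u) k = s * σ := by
    simp only [Pi.smul_apply, smul_eq_mul, ← Finset.mul_sum, σ]
  rw [Finset.piecewise_univ, hF0, sub_zero, hlin, hmass] at hbound
  have hε'σ : ε' * σ < ε := by
    rw [div_mul_eq_mul_div, div_lt_iff₀ (by linarith)]
    nlinarith
  rw [Real.dist_eq, div_sub' hs0.ne', abs_div, abs_of_pos hs0, div_lt_iff₀ hs0]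
  calc |F (s • u) - s * ∑ k, D k 0 * u k| ≤ ε' * (s * σ) := hbound
    _ < ε * s := by nlinarith

theorem lt_sum_partial_mul_of_subhomogeneous
    (hD : ∀ k v, 0 ≤ v → HasDerivWithinAt (fun s => F (update v k s)) (D k v) (Ici 0) (v k))
    (hDcont : ∀ k, ContinuousWithinAt (D k) (Ici 0) 0) (hF0 : F 0 = 0)
    (hsub : ∀ ρ ∈ Ioo (0 : ℝ) 1, ∀ v : Fin m → ℝ, (∀ k, 0 < v k) → ρ * F v < F (ρ • v))
    {u : Fin m → ℝ} (hu : ∀ k, 0 < u k) :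
    F u < ∑ k, D k 0 * u k := by
  have h := lt_of_tendsto_div_of_subhomogeneous (g := fun s => F (s • u))
    (fun r hr ρ hρ => by simpa [mul_smul] using hsub ρ hρ (r • u) fun k => mul_pos hr (hu k))
    (tendsto_apply_smul_div_of_partials hD hDcont hF0 fun k => (hu k).le)
  simpa using h

end Partials

theorem continuousOn_setIntegral_of_continuousOn_prod {α β : Type*} [TopologicalSpace α]
    [MeasurableSpace α] [OpensMeasurableSpace α] [TopologicalSpace β] [FirstCountableTopology β]
    {μ : Measure α} {s K : Set α} {L : Set β} (hK : IsCompact K) (hsK : s ⊆ K)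
    (hs : MeasurableSet s) (hμs : μ s ≠ ⊤) (hL : IsCompact L) {h : α → β → ℝ}
    (hh : ContinuousOn (uncurry h) (K ×ˢ L)) :
    ContinuousOn (fun t => ∫ y in s, h y t ∂μ) L := by
  intro t₀ ht₀
  obtain ⟨C, hC⟩ := (hK.prod hL).exists_bound_of_continuousOn hh
  refine continuousWithinAt_of_dominated (bound := fun _ => C) ?_ ?_ (integrableOn_const hμs) ?_
  · filter_upwards [self_mem_nhdsWithin] with t ht
    exact ((hh.comp (continuousOn_id.prodMk continuousOn_const) fun y hy => ⟨hy, ht⟩).mono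
      hsK).aestronglyMeasurable hs
  · filter_upwards [self_mem_nhdsWithin] with t ht
    exact (ae_restrict_mem hs).mono fun y hy => hC (y, t) ⟨hsK hy, ht⟩
  · refine (ae_restrict_mem hs).mono fun y hy => ?_
    exact (hh (y, t₀) ⟨hsK hy, ht₀⟩).comp (continuousWithinAt_const.prodMk continuousWithinAt_id)
      fun t ht => ⟨hsK hy, ht⟩

theorem exists_pos_mul_le_of_continuousOn {X ι : Type*} [TopologicalSpace X] [Finite ι]
    {K : Set X} (hK : IsCompact K) {φ ψ : ι → X → ℝ} (hφ : ∀ i, ContinuousOn (φ i) K)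
    (hψ : ∀ i, ContinuousOn (ψ i) K) (hψpos : ∀ i, ∀ x ∈ K, 0 < ψ i x) :
    ∃ μ > 0, ∀ i, ∀ x ∈ K, μ * φ i x ≤ ψ i x := by
  have hden : ∀ i x, 0 < |φ i x| + 1 := fun i x => by positivity
  have hb : ∀ i, ∃ b > 0, ∀ x ∈ K, b ≤ ψ i x / (|φ i x| + 1) := fun i =>
    hK.exists_forall_le' ((hψ i).div ((hφ i).abs.add continuousOn_const) fun x _ =>
      (hden i x).ne') fun x hx => div_pos (hψpos i x hx) (hden i x)
  choose b hb0 hb using hb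
  obtain ⟨μ, hμb, hμ0⟩ := (((eventually_all.2 fun i => eventually_lt_nhds (hb0 i)).filter_mono
    nhdsWithin_le_nhds).and (self_mem_nhdsWithin (s := Ioi 0))).exists
  refine ⟨μ, hμ0, fun i x hx => ?_⟩
  have hbx := hb i x hx
  rw [le_div_iff₀ (hden i x)] at hbx
  calc μ * φ i x ≤ μ * (|φ i x| + 1) := by gcongr; linarith [le_abs_self (φ i x)]
    _ ≤ b i * (|φ i x| + 1) := by gcongr; exact (hμb i).le
    _ ≤ ψ i x := hbx

theorem continuousOn_nonlocal_rhs {N : ℕ} {Ω : Set (Fin N → ℝ)} (hΩopen : IsOpen Ω)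
    (hΩbdd : Bornology.IsBounded Ω) {T : ℝ} {j : (Fin N → ℝ) → (Fin N → ℝ) → ℝ}
    (hj : Continuous (uncurry j)) {u : (Fin N → ℝ) → ℝ → ℝ} {g : (Fin N → ℝ) × ℝ → ℝ}
    (hu : ContinuousOn (fun q : (Fin N → ℝ) × ℝ => u q.1 q.2) (closure Ω ×ˢ Icc 0 T))
    (hg : ContinuousOn g (closure Ω ×ˢ Icc 0 T))
    (a c : ℝ) {x : Fin N → ℝ} (hx : x ∈ closure Ω) :
    ContinuousOn (fun t => a * (∫ y in Ω, j x y * u y t) - c * u x t + g (x, t)) (Icc 0 T) := by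
  have hslice : ∀ {h : (Fin N → ℝ) × ℝ → ℝ}, ContinuousOn h (closure Ω ×ˢ Icc 0 T) →
      ContinuousOn (fun t => h (x, t)) (Icc 0 T) := fun hh =>
    hh.comp (continuousOn_const.prodMk continuousOn_id) fun t ht => ⟨hx, ht⟩
  have hint := continuousOn_setIntegral_of_continuousOn_prod hΩbdd.isCompact_closure
    subset_closure hΩopen.measurableSet (hΩbdd.measure_lt_top (μ := volume)).ne isCompact_Icc
    (h := fun y t => j x y * u y t)
    ((hj.comp (continuous_const.prodMk continuous_fst)).continuousOn.mul hu)
  exact ((continuousOn_const.mul hint).sub (continuousOn_const.mul (hslice hu))).add (hslice hg)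

theorem calL_sub_diag_eq {N m : ℕ} (Ω : Set (Fin N → ℝ)) (d : Fin m → ℝ)
    (J : Fin m → (Fin N → ℝ) → (Fin N → ℝ) → ℝ) (dstar : Fin m → (Fin N → ℝ) → ℝ)
    (b : Fin m → Fin m → (Fin N → ℝ) → ℝ → ℝ) (φ φt : Fin m → (Fin N → ℝ) → ℝ → ℝ)
    {i : Fin m} {x : Fin N → ℝ} {t g : ℝ}
    (hφt : φt i x t = d i * (∫ y in Ω, J i x y * φ i y t) - dstar i x * φ i x t + g) :
    calL Ω d J (fun i k x t => b i k x t - if i = k then dstar i x else 0) φ φt i x t =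
      ∑ k, b i k x t * φ k x t - g := by
  simp only [calL, hφt, sub_mul, Finset.sum_sub_distrib, ite_mul, zero_mul, Finset.sum_ite_eq,
    Finset.mem_univ, if_true]
  ring

theorem stmt_19_general {N m : ℕ} (Ω : Set (Fin N → ℝ))
    (hΩopen : IsOpen Ω) (hΩbdd : Bornology.IsBounded Ω)
    (T : ℝ) (hT : 0 < T)
    (d : Fin m → ℝ)
    -- each kernel Jᵢ satisfies condition (J)
    (J : Fin m → (Fin N → ℝ) → (Fin N → ℝ) → ℝ)
    (hJcont : ∀ i, Continuous (Function.uncurry (J i)))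
    -- condition (D)
    (dstar : Fin m → (Fin N → ℝ) → ℝ)
    -- (F1): f continuous, C¹ in u with partial derivatives fd, f(x,t,0) = 0, cooperative
    (f : Fin m → (Fin N → ℝ) → ℝ → (Fin m → ℝ) → ℝ)
    (fd : Fin m → Fin m → (Fin N → ℝ) → ℝ → (Fin m → ℝ) → ℝ)
    (hfcont : ∀ i, ContinuousOn
      (fun q : ((Fin N → ℝ) × ℝ) × (Fin m → ℝ) => f i q.1.1 q.1.2 q.2)
      ((closure Ω ×ˢ Icc (0:ℝ) T) ×ˢ {v : Fin m → ℝ | 0 ≤ v}))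
    (hfzero : ∀ i, ∀ x ∈ closure Ω, ∀ t ∈ Icc (0:ℝ) T, f i x t 0 = 0)
    (hfderiv : ∀ i k, ∀ x ∈ closure Ω, ∀ t ∈ Icc (0:ℝ) T, ∀ v : Fin m → ℝ, 0 ≤ v →
      HasDerivWithinAt (fun s => f i x t (Function.update v k s))
        (fd i k x t v) (Ici (0:ℝ)) (v k))
    (hfdcont : ∀ i k, ContinuousOn
      (fun q : ((Fin N → ℝ) × ℝ) × (Fin m → ℝ) => fd i k q.1.1 q.1.2 q.2)
      ((closure Ω ×ˢ Icc (0:ℝ) T) ×ˢ {v : Fin m → ℝ | 0 ≤ v}))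
    -- strong subhomogeneity
    (hstrong : ∀ ρ ∈ Ioo (0:ℝ) 1, ∀ x ∈ closure Ω, ∀ t ∈ Icc (0:ℝ) T,
      ∀ v : Fin m → ℝ, (∀ i, 0 < v i) →
        ∀ i, ρ * f i x t v < f i x t (fun k => ρ * v k))
    -- λ(𝓛) ≤ 0 : every Collatz–Wielandt lower value is ≤ 0
    (hcrit : ∀ φ φt : Fin m → (Fin N → ℝ) → ℝ → ℝ, IsPm Ω T φ φt →
      ∀ μ : ℝ, (∀ i, ∀ x ∈ closure Ω, ∀ t ∈ Icc (0:ℝ) T,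
        μ * φ i x t ≤ calL Ω d J (fun i k x t => fd i k x t 0 - if i = k then dstar i x else 0) φ φt i x t) → μ ≤ 0) :
    ¬ ∃ U Ut : Fin m → (Fin N → ℝ) → ℝ → ℝ,
      (∀ i, ContinuousOn (fun q : (Fin N → ℝ) × ℝ => U i q.1 q.2)
        (closure Ω ×ˢ Icc (0:ℝ) T)) ∧
      (∀ i, ∀ x ∈ closure Ω, ∀ t ∈ Icc (0:ℝ) T,
        HasDerivWithinAt (U i x) (Ut i x t) (Icc (0:ℝ) T) t) ∧
      (∀ i, ∀ x ∈ closure Ω, ∀ t ∈ Icc (0:ℝ) T, 0 < U i x t) ∧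
      (∀ i, ∀ x ∈ closure Ω, ∀ t ∈ Ioc (0:ℝ) T,
        Ut i x t = d i * (∫ y in Ω, J i x y * U i y t) - dstar i x * U i x t
          + f i x t (fun k => U k x t)) ∧
      (∀ i, ∀ x ∈ closure Ω, U i x 0 = U i x T) := by
  rintro ⟨U, Ut, hUcont, hUderiv, hUpos, hUeq, hUper⟩
  set Q := closure Ω ×ˢ Icc (0 : ℝ) T
  have hfU : ∀ i, ContinuousOn (fun q : (Fin N → ℝ) × ℝ => f i q.1 q.2 fun k => U k q.1 q.2) Q :=
    fun i => (hfcont i).comp (continuousOn_id.prodMk (continuousOn_pi.2 hUcont)) fun q hq =>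
      ⟨hq, fun k => (hUpos k _ hq.1 _ hq.2).le⟩
  have hG : ∀ i, ∀ x ∈ closure Ω, ContinuousOn (fun t => d i * (∫ y in Ω, J i x y * U i y t)
      - dstar i x * U i x t + f i x t fun k => U k x t) (Icc 0 T) := fun i x hx =>
    continuousOn_nonlocal_rhs hΩopen hΩbdd (hJcont i) (hUcont i) (hfU i) _ _ hx
  have hUt : ∀ i, ∀ x ∈ closure Ω, EqOn (Ut i x) _ (Icc 0 T) := fun i x hx =>
    eqOn_Icc_of_hasDerivWithinAt_of_eqOn_Ioc hT (hUderiv i x hx) (hG i x hx) (hUeq i x hx)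
  have hPm : IsPm Ω T U Ut :=
    ⟨hUcont, hUderiv, fun i x hx => (hG i x hx).congr (hUt i x hx), hUper, hUpos⟩
  have hgap : ∀ i, ∀ q ∈ Q,
      f i q.1 q.2 (fun k => U k q.1 q.2) < ∑ k, fd i k q.1 q.2 0 * U k q.1 q.2 :=
    fun i q hq => lt_sum_partial_mul_of_subhomogeneous (hfderiv i · q.1 hq.1 q.2 hq.2)
      (fun k => (hfdcont i k (q, 0) ⟨hq, le_refl (0 : Fin m → ℝ)⟩).comp
        (continuousWithinAt_const.prodMk continuousWithinAt_id) fun v hv => ⟨hq, hv⟩)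
      (hfzero i q.1 hq.1 q.2 hq.2) (fun ρ hρ v hv => hstrong ρ hρ q.1 hq.1 q.2 hq.2 v hv i)
      fun k => hUpos k q.1 hq.1 q.2 hq.2
  obtain ⟨μ, hμ, hμU⟩ := exists_pos_mul_le_of_continuousOn
    (hΩbdd.isCompact_closure.prod isCompact_Icc)
    (φ := fun i q => U i q.1 q.2) hUcont
    (fun i => (continuousOn_finsetSum _ fun k _ =>
      ((hfdcont i k).comp (continuousOn_id.prodMk continuousOn_const) fun q hq =>
        ⟨hq, le_refl (0 : Fin m → ℝ)⟩).mul (hUcont k)).sub (hfU i))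
    fun i q hq => sub_pos.2 (hgap i q hq)
  refine (hcrit U Ut hPm μ fun i x hx t ht => ?_).not_gt hμ
  rw [calL_sub_diag_eq (hφt := hUt i x hx ht)]
  exact hμU i (x, t) ⟨hx, ht⟩

/-- nonexistence of positive periodic solutions of (3.1) when
`λ(𝓛) ≤ 0` and f is strongly subhomogeneous. -/
theorem stmt_19 {N m : ℕ} (Ω : Set (Fin N → ℝ)) (hΩne : Ω.Nonempty)
    (hΩopen : IsOpen Ω) (hΩbdd : Bornology.IsBounded Ω)
    (T : ℝ) (hT : 0 < T)
    (d : Fin m → ℝ) (hd : ∀ i, 0 < d i)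
    -- each kernel Jᵢ satisfies condition (J)
    (J : Fin m → (Fin N → ℝ) → (Fin N → ℝ) → ℝ)
    (hJcont : ∀ i, Continuous (Function.uncurry (J i)))
    (hJnn : ∀ i x y, 0 ≤ J i x y)
    (hJdiag : ∀ i x, 0 < J i x x)
    (hJint : ∀ i x, (∫ y, J i x y) = 1)
    -- condition (D)
    (dstar : Fin m → (Fin N → ℝ) → ℝ)
    (hdstar : ∀ i, (∀ x, dstar i x = d i) ∨ (∀ x, dstar i x = d i * ∫ y in Ω, J i y x))
    -- (F1): f continuous, C¹ in u with partial derivatives fd, f(x,t,0) = 0, cooperative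
    (f : Fin m → (Fin N → ℝ) → ℝ → (Fin m → ℝ) → ℝ)
    (fd : Fin m → Fin m → (Fin N → ℝ) → ℝ → (Fin m → ℝ) → ℝ)
    (hfcont : ∀ i, ContinuousOn
      (fun q : ((Fin N → ℝ) × ℝ) × (Fin m → ℝ) => f i q.1.1 q.1.2 q.2)
      ((closure Ω ×ˢ Icc (0:ℝ) T) ×ˢ {v : Fin m → ℝ | 0 ≤ v}))
    (hfzero : ∀ i, ∀ x ∈ closure Ω, ∀ t ∈ Icc (0:ℝ) T, f i x t 0 = 0)
    (hfderiv : ∀ i k, ∀ x ∈ closure Ω, ∀ t ∈ Icc (0:ℝ) T, ∀ v : Fin m → ℝ, 0 ≤ v →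
      HasDerivWithinAt (fun s => f i x t (Function.update v k s))
        (fd i k x t v) (Ici (0:ℝ)) (v k))
    (hfdcont : ∀ i k, ContinuousOn
      (fun q : ((Fin N → ℝ) × ℝ) × (Fin m → ℝ) => fd i k q.1.1 q.1.2 q.2)
      ((closure Ω ×ˢ Icc (0:ℝ) T) ×ˢ {v : Fin m → ℝ | 0 ≤ v}))
    (hfcoop : ∀ i k, i ≠ k → ∀ x ∈ closure Ω, ∀ t ∈ Icc (0:ℝ) T,
      ∀ v : Fin m → ℝ, 0 ≤ v → 0 ≤ fd i k x t v)
    -- (F2): irreducibility of the Jacobian at some (x₀,t₀) ∈ Q̄_T for all u ≥ 0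
    (hF2 : ∃ x₀ ∈ closure Ω, ∃ t₀ ∈ Icc (0:ℝ) T, ∀ v : Fin m → ℝ, 0 ≤ v →
      MatIrreducible (fun i k => fd i k x₀ t₀ v))
    -- strong subhomogeneity
    (hstrong : ∀ ρ ∈ Ioo (0:ℝ) 1, ∀ x ∈ closure Ω, ∀ t ∈ Icc (0:ℝ) T,
      ∀ v : Fin m → ℝ, (∀ i, 0 < v i) →
        ∀ i, ρ * f i x t v < f i x t (fun k => ρ * v k))
    -- λ(𝓛) ≤ 0 : every Collatz–Wielandt lower value is ≤ 0
    (hcrit : ∀ φ φt : Fin m → (Fin N → ℝ) → ℝ → ℝ, IsPm Ω T φ φt →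
      ∀ μ : ℝ, (∀ i, ∀ x ∈ closure Ω, ∀ t ∈ Icc (0:ℝ) T,
        μ * φ i x t ≤ calL Ω d J (fun i k x t => fd i k x t 0 - if i = k then dstar i x else 0) φ φt i x t) → μ ≤ 0) :
    ¬ ∃ U Ut : Fin m → (Fin N → ℝ) → ℝ → ℝ,
      (∀ i, ContinuousOn (fun q : (Fin N → ℝ) × ℝ => U i q.1 q.2)
        (closure Ω ×ˢ Icc (0:ℝ) T)) ∧
      (∀ i, ∀ x ∈ closure Ω, ∀ t ∈ Icc (0:ℝ) T,
        HasDerivWithinAt (U i x) (Ut i x t) (Icc (0:ℝ) T) t) ∧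
      (∀ i, ∀ x ∈ closure Ω, ∀ t ∈ Icc (0:ℝ) T, 0 < U i x t) ∧
      (∀ i, ∀ x ∈ closure Ω, ∀ t ∈ Ioc (0:ℝ) T,
        Ut i x t = d i * (∫ y in Ω, J i x y * U i y t) - dstar i x * U i x t
          + f i x t (fun k => U k x t)) ∧
      (∀ i, ∀ x ∈ closure Ω, U i x 0 = U i x T) :=
  stmt_19_general Ω hΩopen hΩbdd T hT d J hJcont dstar f fd hfcont hfzero hfderiv hfdcont hstrong
    hcrit
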